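/- arXiv:1512.01257 — 3 statements merged into one kernel-verified Lean document; each statement's English description precedes it below -/
import Mathlib

section
/- For the nugget-modified Ornstein–Uhlenbeck covariance with jump parameter 0 < α < 1, the Fisher information for r at a two-point design with distance d > 0, M_r(d) = α² d² e^{-2 d r}(α² e^{-2 d r} + 1)/(1 − α² e^{-2 d r})², satisfies M_r(d) → 0 as d → 0⁺ and M_r(d) → 0 as d → ∞; in particular M_r attains its maximum at some interior point d* ∈ (0,∞), so the optimal design does not collapse. -/
open Filter Topology Set

theorem stmt6 (α r : ℝ) (hα0 : 0 < α) (hα1 : α < 1) (hr : 0 < r)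
    (M : ℝ → ℝ)
    (hM : ∀ d, M d = α ^ 2 * d ^ 2 * Real.exp (-2 * d * r) * (α ^ 2 * Real.exp (-2 * d * r) + 1) /
      (1 - α ^ 2 * Real.exp (-2 * d * r)) ^ 2) :
    Tendsto M (𝓝[>] 0) (𝓝 0) ∧
    Tendsto M atTop (𝓝 0) ∧
    ∃ dstar ∈ Ioi (0:ℝ), ∀ d ∈ Ioi (0:ℝ), M d ≤ M dstar := by
  have hα2 : α ^ 2 < 1 := by nlinarith
  have hden : ∀ d : ℝ, 0 ≤ d → α ^ 2 * Real.exp (-2 * d * r) < 1 := by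
    intro d hd
    have hexp : Real.exp (-2 * d * r) ≤ 1 := by
      rw [Real.exp_le_one_iff]
      nlinarith
    nlinarith [sq_nonneg α, Real.exp_pos (-2 * d * r)]
  have hMeq : M = fun d => α ^ 2 * d ^ 2 * Real.exp (-2 * d * r) *
      (α ^ 2 * Real.exp (-2 * d * r) + 1) / (1 - α ^ 2 * Real.exp (-2 * d * r)) ^ 2 :=
    funext hM
  -- continuity at nonnegative points
  have hcont : ∀ d : ℝ, 0 ≤ d → ContinuousAt M d := by
    intro d hd
    rw [hMeq]
    apply ContinuousAt.div
    · fun_prop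
    · fun_prop
    · have h := sub_pos.mpr (hden d hd)
      positivity
  have hM0 : M 0 = 0 := by
    rw [hM]; simp
  -- limit at 0+
  have h1 : Tendsto M (𝓝[>] 0) (𝓝 0) := by
    have := (hcont 0 le_rfl).tendsto
    rw [hM0] at this
    exact this.mono_left nhdsWithin_le_nhds
  -- limit at atTop
  have hexp0 : Tendsto (fun d : ℝ => Real.exp (-2 * d * r)) atTop (𝓝 0) := by
    apply Real.tendsto_exp_atBot.comp
    have h2r : (0:ℝ) < 2 * r := by linarith
    have : Tendsto (fun d : ℝ => -(2 * r * d)) atTop atBot :=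
      tendsto_neg_atTop_atBot.comp (tendsto_id.const_mul_atTop h2r)
    exact this.congr (by intro d; simp; ring)
  have h2r : (0:ℝ) < 2 * r := by linarith
  have hcomp : Tendsto (fun d : ℝ => (2 * r * d) ^ 2 * Real.exp (-(2 * r * d))) atTop (𝓝 0) :=
    (Real.tendsto_pow_mul_exp_neg_atTop_nhds_zero 2).comp (tendsto_id.const_mul_atTop h2r)
  have hpoly : Tendsto (fun d : ℝ => d ^ 2 * Real.exp (-(2 * r) * d)) atTop (𝓝 0) := by
    have := hcomp.const_mul ((1:ℝ) / (2 * r) ^ 2)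
    rw [mul_zero] at this
    refine this.congr (fun d => ?_)
    have : (2 * r) ^ 2 ≠ 0 := by positivity
    field_simp
  have h2 : Tendsto M atTop (𝓝 0) := by
    rw [hMeq]
    have hnum : Tendsto (fun d : ℝ => α ^ 2 * d ^ 2 * Real.exp (-2 * d * r) *
        (α ^ 2 * Real.exp (-2 * d * r) + 1)) atTop (𝓝 0) := by
      have h3 : Tendsto (fun d : ℝ => α ^ 2 * (d ^ 2 * Real.exp (-(2 * r) * d))) atTop
          (𝓝 (α ^ 2 * 0)) := hpoly.const_mul _
      have h4 : Tendsto (fun d : ℝ => α ^ 2 * Real.exp (-2 * d * r) + 1) atTop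
          (𝓝 (α ^ 2 * 0 + 1)) := ((hexp0.const_mul _).add tendsto_const_nhds)
      have := h3.mul h4
      simp only [mul_zero, zero_mul] at this
      refine this.congr (by intro d; rw [show -(2 * r) * d = -2 * d * r by ring]; ring)
    have hdenom : Tendsto (fun d : ℝ => (1 - α ^ 2 * Real.exp (-2 * d * r)) ^ 2) atTop
        (𝓝 1) := by
      have : Tendsto (fun d : ℝ => 1 - α ^ 2 * Real.exp (-2 * d * r)) atTop
          (𝓝 (1 - α ^ 2 * 0)) := tendsto_const_nhds.sub (hexp0.const_mul _)
      simpa using this.pow 2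
    have := hnum.div hdenom one_ne_zero
    simpa [Pi.div_def] using this
  refine ⟨h1, h2, ?_⟩
  -- M 1 > 0
  have hM1 : 0 < M 1 := by
    rw [hM]
    have h5 := hden 1 zero_le_one
    have h6 := Real.exp_pos (-2 * 1 * r)
    have hα2p : (0:ℝ) < α ^ 2 := pow_pos hα0 2
    have hnum : 0 < α ^ 2 * 1 ^ 2 * Real.exp (-2 * 1 * r) *
        (α ^ 2 * Real.exp (-2 * 1 * r) + 1) := by nlinarith [mul_pos hα2p h6]
    have hden2 : 0 < (1 - α ^ 2 * Real.exp (-2 * 1 * r)) ^ 2 := pow_pos (by linarith) 2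
    exact div_pos hnum hden2
  -- choose T with M d < M 1 for d ≥ T
  obtain ⟨T, hT⟩ := (h2.eventually (gt_mem_nhds hM1)).exists_forall_of_atTop
  set T' : ℝ := max T 1 with hT'def
  have hcompact : IsCompact (Icc (0:ℝ) T') := isCompact_Icc
  have hcontOn : ContinuousOn M (Icc 0 T') := fun d hd => (hcont d hd.1).continuousWithinAt
  obtain ⟨dstar, hdstar, hmax⟩ := hcompact.exists_isMaxOn
    ⟨0, le_rfl, le_max_of_le_right zero_le_one⟩ hcontOn
  have h1mem : (1:ℝ) ∈ Icc (0:ℝ) T' := ⟨zero_le_one, le_max_right _ _⟩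
  have hM1le : M 1 ≤ M dstar := hmax h1mem
  have hdpos : 0 < dstar := by
    rcases lt_or_eq_of_le hdstar.1 with h | h
    · exact h
    · exfalso; rw [← h, hM0] at hM1le; linarith
  refine ⟨dstar, hdpos, fun d hd => ?_⟩
  by_cases hdT : d ≤ T'
  · exact hmax ⟨le_of_lt hd, hdT⟩
  · have : T ≤ d := le_trans (le_max_left _ _) (le_of_lt (not_le.mp hdT))
    exact le_trans (le_of_lt (hT d this)) hM1le
end

section
/- Let C(d) be a family of n×n symmetric positive definite covariance matrices, nonnegative entrywise, such that d₁ > d₂ implies C(d₂) ≥ C(d₁) ≥ 0 entrywise. Then λ_min(C(d₂)⁻¹) ≤ λ_min(C(d₁)⁻¹), i.e., the minimal eigenvalue of the inverse covariance matrix is non-decreasing as the entries of C decrease. Consequently the lower bound LB(d) = n·λ_min(C(d)⁻¹) for the Fisher information M_θ(d) = 1ᵀ C(d)⁻¹ 1 is non-decreasing in d. -/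
open Matrix Set

lemma dot_eq_inner {n : ℕ} (x y : EuclideanSpace ℝ (Fin n)) :
    (⇑x) ⬝ᵥ (⇑y) = inner ℝ x y := by
  simp [PiLp.inner_apply, dotProduct, mul_comm]

lemma repr_mulVec {n : ℕ} {A : Matrix (Fin n) (Fin n) ℝ} (hA : A.IsHermitian)
    (x : EuclideanSpace ℝ (Fin n)) (y : EuclideanSpace ℝ (Fin n))
    (hy : ⇑y = A *ᵥ ⇑x) (i : Fin n) :
    hA.eigenvectorBasis.repr y i = hA.eigenvalues i * hA.eigenvectorBasis.repr x i := by
  have hAt : Aᵀ = A := by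
    rw [← conjTranspose_eq_transpose_of_trivial, hA.eq]
  have h1 : hA.eigenvectorBasis.repr y i = inner ℝ (hA.eigenvectorBasis i) y :=
    hA.eigenvectorBasis.repr_apply_apply y i
  have h2 : hA.eigenvectorBasis.repr x i = inner ℝ (hA.eigenvectorBasis i) x :=
    hA.eigenvectorBasis.repr_apply_apply x i
  rw [h1, h2, ← dot_eq_inner, ← dot_eq_inner, hy, dotProduct_mulVec, ← mulVec_transpose, hAt,
    hA.mulVec_eigenvectorBasis, smul_dotProduct]
  rfl

lemma quadform_decomp {n : ℕ} {A : Matrix (Fin n) (Fin n) ℝ} (hA : A.IsHermitian)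
    (x : EuclideanSpace ℝ (Fin n)) :
    (⇑x) ⬝ᵥ (A *ᵥ ⇑x) = ∑ i, hA.eigenvalues i * (hA.eigenvectorBasis.repr x i)^2 ∧
    (⇑x) ⬝ᵥ (⇑x) = ∑ i, (hA.eigenvectorBasis.repr x i)^2 := by
  set y : EuclideanSpace ℝ (Fin n) := (WithLp.equiv 2 (Fin n → ℝ)).symm (A *ᵥ ⇑x) with hy
  have hyc : ⇑y = A *ᵥ ⇑x := rfl
  constructor
  · rw [← hyc, dot_eq_inner, ← hA.eigenvectorBasis.repr.inner_map_map x y]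
    simp only [PiLp.inner_apply, RCLike.inner_apply, conj_trivial]
    refine Finset.sum_congr rfl fun i _ => ?_
    rw [repr_mulVec hA x y hyc i]; ring
  · rw [dot_eq_inner, ← hA.eigenvectorBasis.repr.inner_map_map x x]
    simp only [PiLp.inner_apply, RCLike.inner_apply, conj_trivial]
    exact Finset.sum_congr rfl fun i _ => (sq _).symm

lemma rayleigh_upper {n : ℕ} {A : Matrix (Fin n) (Fin n) ℝ} (hA : A.IsHermitian)
    (x : EuclideanSpace ℝ (Fin n)) {μ : ℝ} (h : ∀ i, hA.eigenvalues i ≤ μ) :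
    (⇑x) ⬝ᵥ (A *ᵥ ⇑x) ≤ μ * ((⇑x) ⬝ᵥ (⇑x)) := by
  obtain ⟨h1, h2⟩ := quadform_decomp hA x
  rw [h1, h2, Finset.mul_sum]
  exact Finset.sum_le_sum fun i _ => mul_le_mul_of_nonneg_right (h i) (sq_nonneg _)

lemma rayleigh_lower {n : ℕ} {A : Matrix (Fin n) (Fin n) ℝ} (hA : A.IsHermitian)
    (x : EuclideanSpace ℝ (Fin n)) {μ : ℝ} (h : ∀ i, μ ≤ hA.eigenvalues i) :
    μ * ((⇑x) ⬝ᵥ (⇑x)) ≤ (⇑x) ⬝ᵥ (A *ᵥ ⇑x) := by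
  obtain ⟨h1, h2⟩ := quadform_decomp hA x
  rw [h1, h2, Finset.mul_sum]
  exact Finset.sum_le_sum fun i _ => mul_le_mul_of_nonneg_right (h i) (sq_nonneg _)

lemma eigvec_dot_self {n : ℕ} {A : Matrix (Fin n) (Fin n) ℝ} (hA : A.IsHermitian) (i : Fin n) :
    (⇑(hA.eigenvectorBasis i)) ⬝ᵥ (⇑(hA.eigenvectorBasis i)) = 1 := by
  rw [dot_eq_inner, real_inner_self_eq_norm_sq, hA.eigenvectorBasis.orthonormal.1 i]
  norm_num

lemma inv_mulVec_eig {n : ℕ} {M : Matrix (Fin n) (Fin n) ℝ} (hM : IsUnit M.det)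
    {v : Fin n → ℝ} {μ : ℝ} (hμ : μ ≠ 0) (h : M *ᵥ v = μ • v) : M⁻¹ *ᵥ v = μ⁻¹ • v := by
  have h0 : μ • (M⁻¹ *ᵥ v) = v := by
    rw [← mulVec_smul, ← h, mulVec_mulVec, nonsing_inv_mul _ hM, one_mulVec]
  calc M⁻¹ *ᵥ v = μ⁻¹ • (μ • (M⁻¹ *ᵥ v)) := by
        rw [smul_smul, inv_mul_cancel₀ hμ, one_smul]
    _ = μ⁻¹ • v := by rw [h0]

theorem stmt10 {n : ℕ} (hn : 0 < n) (C : ℝ → Matrix (Fin n) (Fin n) ℝ)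
    (hpd : ∀ d, (C d).PosDef)
    (hnonneg : ∀ d, ∀ i j, 0 ≤ C d i j)
    (hanti : ∀ d₁ d₂ : ℝ, 0 < d₂ → d₂ < d₁ → ∀ i j, C d₁ i j ≤ C d₂ i j)
    (d₁ d₂ : ℝ) (hd₂ : 0 < d₂) (hd : d₂ < d₁) :
    (⨅ i, ((hpd d₂).inv).1.eigenvalues i) ≤ (⨅ i, ((hpd d₁).inv).1.eigenvalues i) ∧
    (n : ℝ) * (⨅ i, ((hpd d₂).inv).1.eigenvalues i) ≤
      (n : ℝ) * (⨅ i, ((hpd d₁).inv).1.eigenvalues i) := by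
  have hne : Nonempty (Fin n) := ⟨⟨0, hn⟩⟩
  -- hermitian proofs
  have hermA : (C d₂).IsHermitian := (hpd d₂).1
  have hermB : (C d₁).IsHermitian := (hpd d₁).1
  -- argmax of eigenvalues of A := C d₂ and B := C d₁
  obtain ⟨iA, hiA⟩ := Finite.exists_max hermA.eigenvalues
  obtain ⟨iB, hiB⟩ := Finite.exists_max hermB.eigenvalues
  set μA := hermA.eigenvalues iA with hμA
  set μB := hermB.eigenvalues iB with hμB
  have hμApos : 0 < μA := (hpd d₂).eigenvalues_pos iA
  have hμBpos : 0 < μB := (hpd d₁).eigenvalues_pos iB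
  -- Step 1 : min eig of (C d₂)⁻¹ ≤ μA⁻¹
  have step1 : (⨅ i, ((hpd d₂).inv).1.eigenvalues i) ≤ μA⁻¹ := by
    set u := hermA.eigenvectorBasis iA with hu
    have hAu : C d₂ *ᵥ ⇑u = μA • ⇑u := hermA.mulVec_eigenvectorBasis iA
    have hAiu : (C d₂)⁻¹ *ᵥ ⇑u = μA⁻¹ • ⇑u :=
      inv_mulVec_eig ((hpd d₂).det_pos.ne'.isUnit) hμApos.ne' hAu
    have hr := rayleigh_lower ((hpd d₂).inv).1 u
      (μ := ⨅ i, ((hpd d₂).inv).1.eigenvalues i)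
      (fun i => ciInf_le (Set.Finite.bddBelow (Set.finite_range _)) i)
    rw [hAiu, dotProduct_smul, eigvec_dot_self hermA iA] at hr
    simpa using hr
  -- Step 2 : μB ≤ μA
  have step2 : μB ≤ μA := by
    set u := hermB.eigenvectorBasis iB with hu
    set w : EuclideanSpace ℝ (Fin n) :=
      (WithLp.equiv 2 (Fin n → ℝ)).symm (fun i => |(⇑u) i|) with hw
    have hwc : ∀ i, (⇑w) i = |(⇑u) i| := fun i => rfl
    have hww : (⇑w) ⬝ᵥ (⇑w) = 1 := by
      rw [← eigvec_dot_self hermB iB]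
      exact Finset.sum_congr rfl fun i _ => by rw [hwc, ← abs_mul, abs_mul_self]
    have hBu : C d₁ *ᵥ ⇑u = μB • ⇑u := hermB.mulVec_eigenvectorBasis iB
    have h1 : μB = (⇑u) ⬝ᵥ (C d₁ *ᵥ ⇑u) := by
      rw [hBu, dotProduct_smul, eigvec_dot_self hermB iB]; simp
    have h2 : (⇑u) ⬝ᵥ (C d₁ *ᵥ ⇑u) ≤ (⇑w) ⬝ᵥ (C d₁ *ᵥ ⇑w) := by
      simp only [dotProduct, mulVec]
      refine Finset.sum_le_sum fun i _ => ?_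
      rw [Finset.mul_sum, Finset.mul_sum]
      refine Finset.sum_le_sum fun j _ => ?_
      calc (⇑u) i * (C d₁ i j * (⇑u) j) ≤ |(⇑u) i * (C d₁ i j * (⇑u) j)| := le_abs_self _
        _ = (⇑w) i * (C d₁ i j * (⇑w) j) := by
            rw [abs_mul, abs_mul, abs_of_nonneg (hnonneg d₁ i j), hwc, hwc]
    have h3 : (⇑w) ⬝ᵥ (C d₁ *ᵥ ⇑w) ≤ (⇑w) ⬝ᵥ (C d₂ *ᵥ ⇑w) := by
      simp only [dotProduct, mulVec]
      refine Finset.sum_le_sum fun i _ => ?_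
      have hwi : 0 ≤ (⇑w) i := by rw [hwc]; exact abs_nonneg _
      refine mul_le_mul_of_nonneg_left (Finset.sum_le_sum fun j _ => ?_) hwi
      have hwj : 0 ≤ (⇑w) j := by rw [hwc]; exact abs_nonneg _
      exact mul_le_mul_of_nonneg_right (hanti d₁ d₂ hd₂ hd i j) hwj
    have h4 : (⇑w) ⬝ᵥ (C d₂ *ᵥ ⇑w) ≤ μA * ((⇑w) ⬝ᵥ (⇑w)) := rayleigh_upper hermA w hiA
    rw [hww, mul_one] at h4
    linarith
  -- Step 3 : μB⁻¹ ≤ min eig of (C d₁)⁻¹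
  have step3 : μB⁻¹ ≤ (⨅ i, ((hpd d₁).inv).1.eigenvalues i) := by
    refine le_ciInf fun i => ?_
    set lam := ((hpd d₁).inv).1.eigenvalues i with hlam
    have hlampos : 0 < lam := ((hpd d₁).inv).eigenvalues_pos i
    set v := ((hpd d₁).inv).1.eigenvectorBasis i with hv
    have hBv : (C d₁)⁻¹ *ᵥ ⇑v = lam • ⇑v := ((hpd d₁).inv).1.mulVec_eigenvectorBasis i
    have hinv : ((C d₁)⁻¹)⁻¹ = C d₁ := by
      rw [Matrix.nonsing_inv_nonsing_inv _ ((hpd d₁).det_pos.ne'.isUnit)]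
    have hBv2 : C d₁ *ᵥ ⇑v = lam⁻¹ • ⇑v := by
      have := inv_mulVec_eig ((hpd d₁).inv.det_pos.ne'.isUnit) hlampos.ne' hBv
      rwa [hinv] at this
    have hr := rayleigh_upper hermB v hiB
    rw [hBv2, dotProduct_smul, eigvec_dot_self ((hpd d₁).inv).1 i] at hr
    simp only [smul_eq_mul, mul_one] at hr
    rw [← inv_inv lam]
    exact inv_anti₀ (inv_pos.2 hlampos) hr
  have main : (⨅ i, ((hpd d₂).inv).1.eigenvalues i) ≤ (⨅ i, ((hpd d₁).inv).1.eigenvalues i) :=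
    le_trans step1 (le_trans (inv_anti₀ hμBpos step2) step3)
  exact ⟨main, mul_le_mul_of_nonneg_left main (Nat.cast_nonneg n)⟩
end

section
/- Let X be a topological space, Y a regular topological space, and (f_γ) a net of functions X → Y converging strongly to f, where each f_γ is continuous at a point x ∈ X. Then f is continuous at x. (Strong convergence: for every open cover 𝒰 of Y there exists γ₀ such that for all γ ≥ γ₀ and all x ∈ X there is U ∈ 𝒰 with f_γ(x) ∈ U and f(x) ∈ U.) -/
open Set

/-- Strong convergence of a net of functions (Kupka–Toma): for every open cover of `Y`
there is an index beyond which each `F γ x` and `f x` lie in a common member of the cover. -/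
def StrongConvergence {ι X Y : Type*} [Preorder ι] [TopologicalSpace Y]
    (F : ι → X → Y) (f : X → Y) : Prop :=
  ∀ 𝒰 : Set (Set Y), (∀ U ∈ 𝒰, IsOpen U) → ⋃₀ 𝒰 = univ →
    ∃ γ₀ : ι, ∀ γ ≥ γ₀, ∀ x : X, ∃ U ∈ 𝒰, F γ x ∈ U ∧ f x ∈ U

theorem stmt15 {ι X Y : Type*} [Preorder ι] [Nonempty ι] [IsDirected ι (· ≤ ·)]
    [TopologicalSpace X] [TopologicalSpace Y] [RegularSpace Y]
    (F : ι → X → Y) (f : X → Y) (x : X)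
    (hcont : ∀ γ, ContinuousAt (F γ) x)
    (hconv : StrongConvergence F f) :
    ContinuousAt f x := by
  rw [ContinuousAt, Filter.tendsto_def]
  intro s hs
  -- Get an open V with f x ∈ V ⊆ s
  obtain ⟨V, hVs, hVopen, hfxV⟩ := mem_nhds_iff.mp hs
  -- Regular neighborhoods: W open, f x ∈ W, closure W ⊆ V
  obtain ⟨t, htn, htc, htV⟩ := exists_mem_nhds_isClosed_subset (hVopen.mem_nhds hfxV)
  set W := interior t with hW
  have hWopen : IsOpen W := isOpen_interior
  have hfxW : f x ∈ W := mem_interior_iff_mem_nhds.mpr htn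
  have hclWV : closure W ⊆ V :=
    (closure_minimal interior_subset htc).trans htV
  -- W' open, f x ∈ W', closure W' ⊆ W
  obtain ⟨t', htn', htc', htW⟩ := exists_mem_nhds_isClosed_subset (hWopen.mem_nhds hfxW)
  set W' := interior t' with hW'
  have hfxW' : f x ∈ W' := mem_interior_iff_mem_nhds.mpr htn'
  have hclW'W : closure W' ⊆ W :=
    (closure_minimal interior_subset htc').trans htW
  -- First cover: {W, (closure W')ᶜ}
  obtain ⟨γ₁, h₁⟩ := hconv {W, (closure W')ᶜ}
    (by rintro U (rfl | rfl)
        · exact hWopen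
        · exact isClosed_closure.isOpen_compl)
    (by apply eq_univ_of_forall
        intro z
        by_cases hz : z ∈ closure W'
        · exact ⟨W, Or.inl rfl, hclW'W hz⟩
        · exact ⟨(closure W')ᶜ, Or.inr rfl, hz⟩)
  -- Second cover: {V, (closure W)ᶜ}
  obtain ⟨γ₂, h₂⟩ := hconv {V, (closure W)ᶜ}
    (by rintro U (rfl | rfl)
        · exact hVopen
        · exact isClosed_closure.isOpen_compl)
    (by apply eq_univ_of_forall
        intro z
        by_cases hz : z ∈ closure W
        · exact ⟨V, Or.inl rfl, hclWV hz⟩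
        · exact ⟨(closure W)ᶜ, Or.inr rfl, hz⟩)
  obtain ⟨γ, hγ₁, hγ₂⟩ := exists_ge_ge γ₁ γ₂
  -- From the first cover at x: F γ x ∈ W
  have hFγx : F γ x ∈ W := by
    obtain ⟨U, hU, hFU, hfU⟩ := h₁ γ hγ₁ x
    rcases hU with rfl | rfl
    · exact hFU
    · exact absurd (subset_closure hfxW') hfU
  -- Continuity of F γ at x gives a neighborhood mapped into W
  have hN : (F γ) ⁻¹' W ∈ nhds x := hcont γ (hWopen.mem_nhds hFγx)
  refine Filter.mem_of_superset hN ?_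
  intro z hz
  obtain ⟨U, hU, hFU, hfU⟩ := h₂ γ hγ₂ z
  rcases hU with rfl | rfl
  · exact hVs hfU
  · exact absurd (subset_closure (show F γ z ∈ W from hz)) hFU
end
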